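/- The union-intersection typing judgments Γ ⊢ M : T | Δ and Γ ⊢' M : T | Δ are equivalent, where ⊢' is the system obtained from ⊢ by restricting the inheritance (subsumption) rule to values with subsidiary-type premises: from Γ ⊢' V : S | Δ and S ≤ T infer Γ ⊢' V : T | Δ. -/

import Mathlib

/-! ## Syntax of the CCV λμ-calculus -/

mutual
/-- Terms of the CCV λμ-calculus. `lett L x M` denotes the let-binding `L[x := M]`. -/
inductive Tm : Type
  | var : ℕ → Tm
  | lam : ℕ → Tm → Tm
  | app : Tm → Tm → Tm
  | lett : Tm → ℕ → Tm → Tm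
  | mu : ℕ → Jp → Tm
  deriving DecidableEq
/-- Jumps of the CCV λμ-calculus. `lett J x M` denotes `J[x := M]`. -/
inductive Jp : Type
  | jmp : ℕ → Tm → Jp
  | lett : Jp → ℕ → Tm → Jp
  deriving DecidableEq
end

/-- Values: variables and λ-abstractions. -/
def Tm.isVal : Tm → Prop
  | .var _ => True
  | .lam _ _ => True
  | _ => False

mutual
/-- Free ordinary variables of a term. -/
def fvTm : Tm → Finset ℕ
  | .var x => {x}
  | .lam x M => fvTm M \ {x}
  | .app M N => fvTm M ∪ fvTm N
  | .lett L x M => (fvTm L \ {x}) ∪ fvTm M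
  | .mu _ J => fvJp J
/-- Free ordinary variables of a jump. -/
def fvJp : Jp → Finset ℕ
  | .jmp _ M => fvTm M
  | .lett J x M => (fvJp J \ {x}) ∪ fvTm M
end

mutual
/-- Free continuation variables of a term. -/
def fkTm : Tm → Finset ℕ
  | .var _ => ∅
  | .lam _ M => fkTm M
  | .app M N => fkTm M ∪ fkTm N
  | .lett L _ M => fkTm L ∪ fkTm M
  | .mu k J => fkJp J \ {k}
/-- Free continuation variables of a jump. -/
def fkJp : Jp → Finset ℕ
  | .jmp k M => insert k (fkTm M)
  | .lett J _ M => fkJp J ∪ fkTm M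
end

mutual
/-- Substitution of the term `V` for the ordinary variable `x`. -/
def substTm (x : ℕ) (V : Tm) : Tm → Tm
  | .var y => if y = x then V else .var y
  | .lam y M => if y = x then .lam y M else .lam y (substTm x V M)
  | .app M N => .app (substTm x V M) (substTm x V N)
  | .lett L y M => .lett (if y = x then L else substTm x V L) y (substTm x V M)
  | .mu k J => .mu k (substJp x V J)
def substJp (x : ℕ) (V : Tm) : Jp → Jp
  | .jmp k M => .jmp k (substTm x V M)
  | .lett J y M => .lett (if y = x then J else substJp x V J) y (substTm x V M)
end

mutual
/-- Structural substitution `{[k]□ ↦ [k](M[x := □])}`, applied recursively. -/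
def ssubTm (k x : ℕ) (M : Tm) : Tm → Tm
  | .var y => .var y
  | .lam y N => .lam y (ssubTm k x M N)
  | .app N P => .app (ssubTm k x M N) (ssubTm k x M P)
  | .lett L y N => .lett (ssubTm k x M L) y (ssubTm k x M N)
  | .mu l J => if l = k then .mu l J else .mu l (ssubJp k x M J)
def ssubJp (k x : ℕ) (M : Tm) : Jp → Jp
  | .jmp l N => if l = k then .jmp k (.lett M x (ssubTm k x M N))
                else .jmp l (ssubTm k x M N)
  | .lett J y N => .lett (ssubJp k x M J) y (ssubTm k x M N)
end

mutual
/-- Renaming of the continuation variable `k` by `l`: `{[k]□ ↦ [l]□}`. -/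
def renTm (k l : ℕ) : Tm → Tm
  | .var y => .var y
  | .lam y N => .lam y (renTm k l N)
  | .app N P => .app (renTm k l N) (renTm k l P)
  | .lett L y N => .lett (renTm k l L) y (renTm k l N)
  | .mu m J => if m = k then .mu m J else .mu m (renJp k l J)
def renJp (k l : ℕ) : Jp → Jp
  | .jmp m N => if m = k then .jmp l (renTm k l N) else .jmp m (renTm k l N)
  | .lett J y N => .lett (renJp k l J) y (renTm k l N)
end

/-! ## Identification of terms: the equality axioms -/

mutual
/-- The congruence generated by the three equality axioms (let-associativity,
    μ/let commutation, jumper/let commutation). -/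
inductive SEqTm : Tm → Tm → Prop
  | refl (M) : SEqTm M M
  | symm : SEqTm M N → SEqTm N M
  | trans : SEqTm M N → SEqTm N P → SEqTm M P
  | assoc (L : Tm) (x : ℕ) (M : Tm) (y : ℕ) (N : Tm) (h : y ∉ fvTm L) :
      SEqTm (.lett L x (.lett M y N)) (.lett (.lett L x M) y N)
  | muLet (k : ℕ) (J : Jp) (x : ℕ) (M : Tm) (h : k ∉ fkTm M) :
      SEqTm (.lett (.mu k J) x M) (.mu k (.lett J x M))
  | lam : SEqTm M M' → SEqTm (.lam x M) (.lam x M')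
  | app : SEqTm M M' → SEqTm N N' → SEqTm (.app M N) (.app M' N')
  | lett : SEqTm L L' → SEqTm M M' → SEqTm (.lett L x M) (.lett L' x M')
  | mu : SEqJp J J' → SEqTm (.mu k J) (.mu k J')
inductive SEqJp : Jp → Jp → Prop
  | refl (J) : SEqJp J J
  | symm : SEqJp J J' → SEqJp J' J
  | trans : SEqJp J J' → SEqJp J' J'' → SEqJp J J''
  | jmpLet (k : ℕ) (L : Tm) (x : ℕ) (M : Tm) :
      SEqJp (.jmp k (.lett L x M)) (.lett (.jmp k L) x M)
  | assoc (J : Jp) (x : ℕ) (M : Tm) (y : ℕ) (N : Tm) (h : y ∉ fvJp J) :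
      SEqJp (.lett J x (.lett M y N)) (.lett (.lett J x M) y N)
  | jmp : SEqTm M M' → SEqJp (.jmp k M) (.jmp k M')
  | lett : SEqJp J J' → SEqTm M M' → SEqJp (.lett J x M) (.lett J' x M')
end

/-! ## Reduction rules -/

/-- Root reduction steps on terms, tagged by the rules of the CCV λμ-calculus. -/
inductive RootTm : Tm → Tm → Prop
  | ad1 (N M : Tm) (z : ℕ) (hN : ¬ N.isVal) (hz : z ∉ fvTm N ∪ fvTm M) :
      RootTm (.app N M) (.lett (.app (.var z) M) z N)
  | ad2 (V N : Tm) (z : ℕ) (hV : V.isVal) (hN : ¬ N.isVal) (hz : z ∉ fvTm V ∪ fvTm N) :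
      RootTm (.app V N) (.lett (.app V (.var z)) z N)
  | beta_lam (x : ℕ) (M V : Tm) (hV : V.isVal) :
      RootTm (.app (.lam x M) V) (.lett M x V)
  | beta_let (M : Tm) (x : ℕ) (V : Tm) (hV : V.isVal) :
      RootTm (.lett M x V) (substTm x V M)
  | beta_mu (M : Tm) (x k : ℕ) (J : Jp) (hk : k ∉ fkTm M) :
      RootTm (.lett M x (.mu k J)) (.mu k (ssubJp k x M J))
  | eta_lam (x : ℕ) (V : Tm) (hV : V.isVal) (hx : x ∉ fvTm V) :
      RootTm (.lam x (.app V (.var x))) V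
  | eta_let (x : ℕ) (M : Tm) : RootTm (.lett (.var x) x M) M
  | eta_mu (k : ℕ) (M : Tm) (hk : k ∉ fkTm M) :
      RootTm (.mu k (.jmp k M)) M

/-- Root reduction steps on jumps (rule β_jmp). -/
inductive RootJp : Jp → Jp → Prop
  | beta_jmp (l k : ℕ) (J : Jp) : RootJp (.jmp l (.mu k J)) (renJp k l J)

/-- The administrative root steps (rules ad₁ and ad₂). -/
inductive AdmRootTm : Tm → Tm → Prop
  | ad1 (N M : Tm) (z : ℕ) (hN : ¬ N.isVal) (hz : z ∉ fvTm N ∪ fvTm M) :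
      AdmRootTm (.app N M) (.lett (.app (.var z) M) z N)
  | ad2 (V N : Tm) (z : ℕ) (hV : V.isVal) (hN : ¬ N.isVal) (hz : z ∉ fvTm V ∪ fvTm N) :
      AdmRootTm (.app V N) (.lett (.app V (.var z)) z N)

/-- The non-administrative ("practical") root steps on terms. -/
inductive PracRootTm : Tm → Tm → Prop
  | beta_lam (x : ℕ) (M V : Tm) (hV : V.isVal) :
      PracRootTm (.app (.lam x M) V) (.lett M x V)
  | beta_let (M : Tm) (x : ℕ) (V : Tm) (hV : V.isVal) :
      PracRootTm (.lett M x V) (substTm x V M)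
  | beta_mu (M : Tm) (x k : ℕ) (J : Jp) (hk : k ∉ fkTm M) :
      PracRootTm (.lett M x (.mu k J)) (.mu k (ssubJp k x M J))
  | eta_lam (x : ℕ) (V : Tm) (hV : V.isVal) (hx : x ∉ fvTm V) :
      PracRootTm (.lam x (.app V (.var x))) V
  | eta_let (x : ℕ) (M : Tm) : PracRootTm (.lett (.var x) x M) M
  | eta_mu (k : ℕ) (M : Tm) (hk : k ∉ fkTm M) :
      PracRootTm (.mu k (.jmp k M)) M

/-- The vertical root step (rule η_μ). -/
inductive VertRootTm : Tm → Tm → Prop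
  | eta_mu (k : ℕ) (M : Tm) (hk : k ∉ fkTm M) :
      VertRootTm (.mu k (.jmp k M)) M

/-- The β-type root steps (non-η rules): ad₁, ad₂, β_λ, β_let, β_μ. -/
inductive QRootTm : Tm → Tm → Prop
  | ad1 (N M : Tm) (z : ℕ) (hN : ¬ N.isVal) (hz : z ∉ fvTm N ∪ fvTm M) :
      QRootTm (.app N M) (.lett (.app (.var z) M) z N)
  | ad2 (V N : Tm) (z : ℕ) (hV : V.isVal) (hN : ¬ N.isVal) (hz : z ∉ fvTm V ∪ fvTm N) :
      QRootTm (.app V N) (.lett (.app V (.var z)) z N)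
  | beta_lam (x : ℕ) (M V : Tm) (hV : V.isVal) :
      QRootTm (.app (.lam x M) V) (.lett M x V)
  | beta_let (M : Tm) (x : ℕ) (V : Tm) (hV : V.isVal) :
      QRootTm (.lett M x V) (substTm x V M)
  | beta_mu (M : Tm) (x k : ℕ) (J : Jp) (hk : k ∉ fkTm M) :
      QRootTm (.lett M x (.mu k J)) (.mu k (ssubJp k x M J))

/-- The η-type root steps: η_λ, η_let, η_μ. -/
inductive EtaRootTm : Tm → Tm → Prop
  | eta_lam (x : ℕ) (V : Tm) (hV : V.isVal) (hx : x ∉ fvTm V) :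
      EtaRootTm (.lam x (.app V (.var x))) V
  | eta_let (x : ℕ) (M : Tm) : EtaRootTm (.lett (.var x) x M) M
  | eta_mu (k : ℕ) (M : Tm) (hk : k ∉ fkTm M) :
      EtaRootTm (.mu k (.jmp k M)) M

/-- The empty root relation on jumps. -/
def NoRootJp : Jp → Jp → Prop := fun _ _ => False

mutual
/-- Closure of root relations under all term/jump contexts (terms). -/
inductive CtxTm (R : Tm → Tm → Prop) (RJ : Jp → Jp → Prop) : Tm → Tm → Prop
  | root : R M M' → CtxTm R RJ M M'
  | lam : CtxTm R RJ M M' → CtxTm R RJ (.lam x M) (.lam x M')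
  | appL : CtxTm R RJ M M' → CtxTm R RJ (.app M N) (.app M' N)
  | appR : CtxTm R RJ N N' → CtxTm R RJ (.app M N) (.app M N')
  | lettL : CtxTm R RJ L L' → CtxTm R RJ (.lett L x M) (.lett L' x M)
  | lettR : CtxTm R RJ M M' → CtxTm R RJ (.lett L x M) (.lett L x M')
  | mu : CtxJp R RJ J J' → CtxTm R RJ (.mu k J) (.mu k J')
/-- Closure of root relations under all term/jump contexts (jumps). -/
inductive CtxJp (R : Tm → Tm → Prop) (RJ : Jp → Jp → Prop) : Jp → Jp → Prop
  | root : RJ J J' → CtxJp R RJ J J'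
  | jmp : CtxTm R RJ M M' → CtxJp R RJ (.jmp k M) (.jmp k M')
  | lettL : CtxJp R RJ J J' → CtxJp R RJ (.lett J x M) (.lett J' x M)
  | lettR : CtxTm R RJ M M' → CtxJp R RJ (.lett J x M) (.lett J x M')
end

/-- One full reduction step of the CCV λμ-calculus on terms. -/
def StepTm : Tm → Tm → Prop := CtxTm RootTm RootJp
/-- One full reduction step of the CCV λμ-calculus on jumps. -/
def StepJp : Jp → Jp → Prop := CtxJp RootTm RootJp
/-- One vertical reduction step (η_μ at any position). -/
def VStepTm : Tm → Tm → Prop := CtxTm VertRootTm NoRootJp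
/-- One administrative reduction step. -/
def AStepTm : Tm → Tm → Prop := CtxTm AdmRootTm NoRootJp
/-- One practical (non-administrative) reduction step. -/
def PStepTm : Tm → Tm → Prop := CtxTm PracRootTm RootJp
def PStepJp : Jp → Jp → Prop := CtxJp PracRootTm RootJp
/-- One β-type (non-η) reduction step. -/
def QStepTm : Tm → Tm → Prop := CtxTm QRootTm RootJp
/-- One η-type reduction step. -/
def EStepTm : Tm → Tm → Prop := CtxTm EtaRootTm NoRootJp

/-- A step of the relation `S`, performed modulo the identification of terms
    by the equality axioms. -/
def MStep (S : Tm → Tm → Prop) (M N : Tm) : Prop :=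
  ∃ M' N', SEqTm M M' ∧ S M' N' ∧ SEqTm N' N
def MStepJ (S : Jp → Jp → Prop) (J J' : Jp) : Prop :=
  ∃ J₁ J₂, SEqJp J J₁ ∧ S J₁ J₂ ∧ SEqJp J₂ J'

/-- CCV equality: the congruence generated by the reduction rules (and the
    identification of terms). -/
def CcvEq : Tm → Tm → Prop :=
  Relation.EqvGen (fun M N => StepTm M N ∨ SEqTm M N)

/-! ## Union-intersection types -/

mutual
/-- Raw types `R ::= α | S → T`. -/
inductive RawTy : Type
  | atom : ℕ → RawTy
  | arrow : STy → TTy → RawTy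
/-- Subsidiary types: finite formal intersections of raw types
    (the empty intersection is ω). -/
inductive STy : Type
  | inter : List RawTy → STy
/-- Types: finite formal unions of subsidiary types
    (the empty union is Ʊ). -/
inductive TTy : Type
  | union : List STy → TTy
end

/-- A subsidiary type regarded as a type (a singleton union). -/
def STy.toT (S : STy) : TTy := .union [S]
/-- A raw type regarded as a subsidiary type (a singleton intersection). -/
def RawTy.toS (R : RawTy) : STy := .inter [R]

/-- ω, the empty intersection. -/
def STy.omega : STy := .inter []
/-- Ʊ, the empty union. -/
def TTy.agemo : TTy := .union []

mutual
/-- The subtype relation on raw types. -/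
inductive SubR : RawTy → RawTy → Prop
  | atom (a : ℕ) : SubR (.atom a) (.atom a)
  | arrow {S S' T T'} : SubS S' S → SubT T T' → SubR (.arrow S T) (.arrow S' T')
/-- The subtype relation on subsidiary types.  Intersections are taken up to
    associativity and commutativity; `weaken` is the projection rule
    `S ≤ S' ⟹ S ∩ S'' ≤ S'` and `pair` the pairing rule. -/
inductive SubS : STy → STy → Prop
  | ofRaw {R R'} : SubR R R' → SubS (.inter [R]) (.inter [R'])
  | weaken {l l' : List RawTy} {S'} : SubS (.inter l) S' → l.Subperm l' →
      SubS (.inter l') S'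
  | pair {S} {l' : List RawTy} : (∀ R' ∈ l', SubS S (.inter [R'])) →
      SubS S (.inter l')
/-- The subtype relation on types.  `widen` is the injection rule
    `T ≤ T' ⟹ T ≤ T'' ∪ T'` and `copair` the copairing rule. -/
inductive SubT : TTy → TTy → Prop
  | ofS {S S'} : SubS S S' → SubT (.union [S]) (.union [S'])
  | widen {T} {l l' : List STy} : SubT T (.union l) → l.Subperm l' →
      SubT T (.union l')
  | copair {l : List STy} {T} : (∀ S ∈ l, SubT (.union [S]) T) →
      SubT (.union l) T
end

/-! ## The union-intersection type system for the CCV λμ-calculus -/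

/-- Typing environments for ordinary variables (assigned subsidiary types). -/
def OEnv := ℕ → Option STy
/-- Typing environments for continuation variables (assigned types). -/
def KEnv := ℕ → Option TTy

mutual
/-- The typing judgment Γ ⊢ M : T | Δ of the union-intersection type
    discipline for the CCV λμ-calculus. -/
inductive TJ : OEnv → Tm → TTy → KEnv → Prop
  | var {Γ : OEnv} {x : ℕ} {S : STy} {Δ : KEnv} :
      Γ x = some S → TJ Γ (.var x) S.toT Δ
  | lam {Γ : OEnv} {x : ℕ} {M : Tm} {Δ : KEnv} (l : List (STy × TTy)) :
      (∀ p ∈ l, TJ (Function.update Γ x (some p.1)) M p.2 Δ) →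
      TJ Γ (.lam x M) (STy.inter (l.map fun p => RawTy.arrow p.1 p.2)).toT Δ
  | app {Γ : OEnv} {M N : Tm} {T : TTy} {Δ : KEnv} (ll : List (List STy)) :
      TJ Γ M (TTy.union (ll.map fun sl => STy.inter (sl.map fun S => RawTy.arrow S T))) Δ →
      (∀ sl ∈ ll, TJ Γ N (TTy.union sl) Δ) →
      TJ Γ (.app M N) T Δ
  | lett {Γ : OEnv} {M : Tm} {x : ℕ} {N : Tm} {T : TTy} {Δ : KEnv} (l : List STy) :
      (∀ S ∈ l, TJ (Function.update Γ x (some S)) M T Δ) →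
      TJ Γ N (TTy.union l) Δ →
      TJ Γ (.lett M x N) T Δ
  | mu {Γ : OEnv} {k : ℕ} {J : Jp} {T : TTy} {Δ : KEnv} :
      JJ Γ J (Function.update Δ k (some T)) →
      TJ Γ (.mu k J) T Δ
  | inherit {Γ : OEnv} {M : Tm} {T T' : TTy} {Δ : KEnv} :
      TJ Γ M T Δ → SubT T T' → TJ Γ M T' Δ
/-- The typing judgment Γ ⊢ J : ⊥⊥ | Δ for jumps. -/
inductive JJ : OEnv → Jp → KEnv → Prop
  | jmp {Γ : OEnv} {k : ℕ} {M : Tm} {T : TTy} {Δ : KEnv} :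
      TJ Γ M T Δ → Δ k = some T → JJ Γ (.jmp k M) Δ
  | lett {Γ : OEnv} {J : Jp} {x : ℕ} {N : Tm} {Δ : KEnv} (l : List STy) :
      (∀ S ∈ l, JJ (Function.update Γ x (some S)) J Δ) →
      TJ Γ N (TTy.union l) Δ →
      JJ Γ (.lett J x N) Δ
end

mutual
/-- The typing judgment Γ ⊢' M : T | Δ, in which the inheritance rule is
    restricted to values with a subsidiary-type premise. -/
inductive TJ' : OEnv → Tm → TTy → KEnv → Prop
  | var {Γ : OEnv} {x : ℕ} {S : STy} {Δ : KEnv} :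
      Γ x = some S → TJ' Γ (.var x) S.toT Δ
  | lam {Γ : OEnv} {x : ℕ} {M : Tm} {Δ : KEnv} (l : List (STy × TTy)) :
      (∀ p ∈ l, TJ' (Function.update Γ x (some p.1)) M p.2 Δ) →
      TJ' Γ (.lam x M) (STy.inter (l.map fun p => RawTy.arrow p.1 p.2)).toT Δ
  | app {Γ : OEnv} {M N : Tm} {T : TTy} {Δ : KEnv} (ll : List (List STy)) :
      TJ' Γ M (TTy.union (ll.map fun sl => STy.inter (sl.map fun S => RawTy.arrow S T))) Δ →
      (∀ sl ∈ ll, TJ' Γ N (TTy.union sl) Δ) →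
      TJ' Γ (.app M N) T Δ
  | lett {Γ : OEnv} {M : Tm} {x : ℕ} {N : Tm} {T : TTy} {Δ : KEnv} (l : List STy) :
      (∀ S ∈ l, TJ' (Function.update Γ x (some S)) M T Δ) →
      TJ' Γ N (TTy.union l) Δ →
      TJ' Γ (.lett M x N) T Δ
  | mu {Γ : OEnv} {k : ℕ} {J : Jp} {T : TTy} {Δ : KEnv} :
      JJ' Γ J (Function.update Δ k (some T)) →
      TJ' Γ (.mu k J) T Δ
  | inheritV {Γ : OEnv} {V : Tm} {S : STy} {T : TTy} {Δ : KEnv} :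
      V.isVal → TJ' Γ V S.toT Δ → SubT S.toT T → TJ' Γ V T Δ
inductive JJ' : OEnv → Jp → KEnv → Prop
  | jmp {Γ : OEnv} {k : ℕ} {M : Tm} {T : TTy} {Δ : KEnv} :
      TJ' Γ M T Δ → Δ k = some T → JJ' Γ (.jmp k M) Δ
  | lett {Γ : OEnv} {J : Jp} {x : ℕ} {N : Tm} {Δ : KEnv} (l : List STy) :
      (∀ S ∈ l, JJ' (Function.update Γ x (some S)) J Δ) →
      TJ' Γ N (TTy.union l) Δ →
      JJ' Γ (.lett J x N) Δ
end

/-!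
Every `⊢'`-derivation is a `⊢`-derivation, since `inheritV` is an instance of `inherit`.
Conversely, one shows by mutual induction on `⊢`-derivations the stronger statement that
`Γ ⊢ M : T | Δ` yields `Γ ⊢' M : T⁺ | Δ⁺` whenever `T ≤ T⁺` and `Δ ≤ Δ⁺`. Subsumption is thus
pushed to the leaves: an `inherit` step is absorbed by transitivity of `≤`, at an application
it moves into the result types of the arrows of the function, at a `μ` into the type of the
bound continuation, and it survives only on variables and abstractions, which are values.
-/

def STy.toList : STy → List RawTy
  | .inter l => l

def TTy.toList : TTy → List STy
  | .union l => l

theorem SubS.of_forall_exists {l l' : List RawTy} (h : ∀ R' ∈ l', ∃ R ∈ l, SubR R R') :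
    SubS (.inter l) (.inter l') :=
  .pair fun R' hR' =>
    let ⟨_, hR, hRR⟩ := h R' hR'
    .weaken (.ofRaw hRR) (List.singleton_subperm_iff.mpr hR)

theorem SubT.of_forall_exists {l l' : List STy} (h : ∀ S ∈ l, ∃ S' ∈ l', SubS S S') :
    SubT (.union l) (.union l') :=
  .copair fun S hS =>
    let ⟨_, hS', hSS⟩ := h S hS
    .widen (.ofS hSS) (List.singleton_subperm_iff.mpr hS')

theorem SubS.exists_of_mem {S S' : STy} :
    SubS S S' → ∀ R' ∈ S'.toList, ∃ R ∈ S.toList, SubR R R'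
  | .ofRaw h, _, hR' => ⟨_, List.mem_singleton_self _, List.eq_of_mem_singleton hR' ▸ h⟩
  | .weaken h hsub, R', hR' =>
    let ⟨R, hR, hRR⟩ := exists_of_mem h R' hR'
    ⟨R, hsub.subset hR, hRR⟩
  | .pair h, R', hR' => exists_of_mem (h R' hR') R' (List.mem_singleton_self _)

theorem SubT.exists_of_mem {T T' : TTy} :
    SubT T T' → ∀ S ∈ T.toList, ∃ S' ∈ T'.toList, SubS S S'
  | .ofS h, _, hS => ⟨_, List.mem_singleton_self _, List.eq_of_mem_singleton hS ▸ h⟩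
  | .widen h hsub, S, hS =>
    let ⟨S', hS', hSS⟩ := exists_of_mem h S hS
    ⟨S', hsub.subset hS', hSS⟩
  | .copair h, S, hS => exists_of_mem (h S hS) S (List.mem_singleton_self _)

mutual
theorem SubR.refl : ∀ R : RawTy, SubR R R
  | .atom a => .atom a
  | .arrow S T => .arrow (SubS.refl S) (SubT.refl T)
termination_by R => sizeOf R
theorem SubS.refl : ∀ S : STy, SubS S S
  | .inter l => .of_forall_exists fun R hR =>
      have := List.sizeOf_lt_of_mem hR
      ⟨R, hR, SubR.refl R⟩
termination_by S => sizeOf S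
theorem SubT.refl : ∀ T : TTy, SubT T T
  | .union l => .of_forall_exists fun S hS =>
      have := List.sizeOf_lt_of_mem hS
      ⟨S, hS, SubS.refl S⟩
termination_by T => sizeOf T
end

-- Transitivity is not a rule of `≤`; it is derived through the componentwise description
-- given by `exists_of_mem`.
mutual
theorem SubR.trans : ∀ {R₁ R₂ R₃ : RawTy}, SubR R₁ R₂ → SubR R₂ R₃ → SubR R₁ R₃
  | _, _, _, .atom a, .atom _ => .atom a
  | _, .arrow _ _, _, .arrow hS₁ hT₁, .arrow hS₂ hT₂ => .arrow (hS₂.trans hS₁) (hT₁.trans hT₂)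
termination_by _ R₂ => sizeOf R₂
theorem SubS.trans : ∀ {S₁ S₂ S₃ : STy}, SubS S₁ S₂ → SubS S₂ S₃ → SubS S₁ S₃
  | .inter _, .inter l₂, .inter _, h₁₂, h₂₃ => .of_forall_exists fun R₃ hR₃ =>
    let ⟨R₂, (hR₂ : R₂ ∈ l₂), h₂⟩ := h₂₃.exists_of_mem R₃ hR₃
    let ⟨R₁, hR₁, h₁⟩ := h₁₂.exists_of_mem R₂ hR₂
    have := List.sizeOf_lt_of_mem hR₂
    ⟨R₁, hR₁, h₁.trans h₂⟩
termination_by _ S₂ => sizeOf S₂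
theorem SubT.trans : ∀ {T₁ T₂ T₃ : TTy}, SubT T₁ T₂ → SubT T₂ T₃ → SubT T₁ T₃
  | .union _, .union l₂, .union _, h₁₂, h₂₃ => .of_forall_exists fun S₁ hS₁ =>
    let ⟨S₂, (hS₂ : S₂ ∈ l₂), h₂⟩ := h₁₂.exists_of_mem S₁ hS₁
    let ⟨S₃, hS₃, h₃⟩ := h₂₃.exists_of_mem S₂ hS₂
    have := List.sizeOf_lt_of_mem hS₂
    ⟨S₃, hS₃, h₂.trans h₃⟩
termination_by _ T₂ => sizeOf T₂
end

-- The order `Δ ≤ Δ⁺` on continuation environments.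
def KEnv.Le (Δ Δ' : KEnv) : Prop :=
  ∀ k T, Δ k = some T → ∃ T', Δ' k = some T' ∧ SubT T T'

theorem KEnv.Le.refl (Δ : KEnv) : Δ.Le Δ := fun _ T h => ⟨T, h, SubT.refl T⟩

theorem KEnv.Le.update {Δ Δ' : ℕ → Option TTy} (h : KEnv.Le Δ Δ') (k : ℕ) {T T' : TTy}
    (hT : SubT T T') :
    KEnv.Le (Function.update Δ k (some T)) (Function.update Δ' k (some T')) := by
  intro l U hU
  rw [Function.update_apply] at hU ⊢
  split_ifs at hU ⊢
  · exact ⟨T', rfl, Option.some_injective _ hU ▸ hT⟩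
  · exact h l U hU

theorem SubT.unionInterArrow_mono (ll : List (List STy)) {T T' : TTy} (h : SubT T T') :
    SubT (.union (ll.map fun sl => .inter (sl.map fun S => .arrow S T)))
      (.union (ll.map fun sl => .inter (sl.map fun S => .arrow S T'))) := by
  refine .of_forall_exists ?_
  simp only [List.mem_map, exists_exists_and_eq_and]
  rintro _ ⟨sl, hsl, rfl⟩
  refine ⟨sl, hsl, .of_forall_exists ?_⟩
  simp only [List.mem_map, exists_exists_and_eq_and]
  rintro _ ⟨S, hS, rfl⟩
  exact ⟨S, hS, .arrow (SubS.refl S) h⟩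

mutual
theorem TJ.toTJ' {Γ : OEnv} {M : Tm} {T T' : TTy} {Δ Δ' : KEnv} :
    TJ Γ M T Δ → SubT T T' → Δ.Le Δ' → TJ' Γ M T' Δ'
  | .var hx, hT, _ => .inheritV trivial (.var hx) hT
  | .lam l h, hT, hΔ =>
    .inheritV trivial (.lam l fun p hp => (h p hp).toTJ' (.refl _) hΔ) hT
  | .app ll hM hN, hT, hΔ =>
    .app ll (hM.toTJ' (.unionInterArrow_mono ll hT) hΔ) fun sl hsl =>
      (hN sl hsl).toTJ' (.refl _) hΔ
  | .lett l hM hN, hT, hΔ =>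
    .lett l (fun S hS => (hM S hS).toTJ' hT hΔ) (hN.toTJ' (.refl _) hΔ)
  | .mu hJ, hT, hΔ => .mu (hJ.toJJ' (hΔ.update _ hT))
  | .inherit hM hsub, hT, hΔ => hM.toTJ' (hsub.trans hT) hΔ
theorem JJ.toJJ' {Γ : OEnv} {J : Jp} {Δ Δ' : KEnv} : JJ Γ J Δ → Δ.Le Δ' → JJ' Γ J Δ'
  | .jmp hM hk, hΔ =>
    let ⟨_, hk', hT⟩ := hΔ _ _ hk
    .jmp (hM.toTJ' hT hΔ) hk'
  | .lett l hJ hN, hΔ => .lett l (fun S hS => (hJ S hS).toJJ' hΔ) (hN.toTJ' (.refl _) hΔ)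
end

mutual
theorem TJ'.toTJ {Γ : OEnv} {M : Tm} {T : TTy} {Δ : KEnv} : TJ' Γ M T Δ → TJ Γ M T Δ
  | .var hx => .var hx
  | .lam l h => .lam l fun p hp => (h p hp).toTJ
  | .app ll hM hN => .app ll hM.toTJ fun sl hsl => (hN sl hsl).toTJ
  | .lett l hM hN => .lett l (fun S hS => (hM S hS).toTJ) hN.toTJ
  | .mu hJ => .mu hJ.toJJ
  | .inheritV _ hV hsub => .inherit hV.toTJ hsub
theorem JJ'.toJJ {Γ : OEnv} {J : Jp} {Δ : KEnv} : JJ' Γ J Δ → JJ Γ J Δ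
  | .jmp hM hk => .jmp hM.toTJ hk
  | .lett l hJ hN => .lett l (fun S hS => (hJ S hS).toJJ) hN.toTJ
end

/-- The judgments Γ ⊢ M : T | Δ and Γ ⊢' M : T | Δ are
equivalent. -/
theorem tj_iff_tj' :
    ∀ (Γ : OEnv) (M : Tm) (T : TTy) (Δ : KEnv),
      TJ Γ M T Δ ↔ TJ' Γ M T Δ :=
  fun _ _ T Δ => ⟨fun h => h.toTJ' (.refl T) (KEnv.Le.refl Δ), TJ'.toTJ⟩
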